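/- arXiv:1905.13207 — 4 statements merged into one kernel-verified Lean document; each statement's English description precedes it below -/
import Mathlib

section
/- Let (Ω, 𝒜, P) be a probability space, let (E, ℰ) and (F, ℱ) be measurable spaces, let X : Ω → E be measurable and let Y_i : Ω → F be measurable for each i ∈ ℕ. Assume (i) the sequence (X, Y_i)_{i∈ℕ} is stationary, i.e. the joint law of (X, (Y_{i+1})_{i∈ℕ}) on E × F^ℕ equals the joint law of (X, (Y_i)_{i∈ℕ}) (equivalently, the pushforward of the joint law of (X, (Y_i)_i) under the map (x, y) ↦ (x, y∘succ) equals that joint law); and (ii) the sequence (Y_i)_{i∈ℕ} is ergodic, i.e. the left shift on F^ℕ is a measure-preserving and ergodic transformation for the law of (Y_i)_{i∈ℕ}. Then X and Y_1 are independent: the joint law of (X, Y_1) on E × F is the product of the law of X and the law of Y_1. -/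
/-!
Fix a measurable `A ⊆ E`. The measure `C ↦ P(X ∈ A, (Yᵢ) ∈ C)` is shift-invariant by
stationarity and absolutely continuous with respect to the law of `(Yᵢ)`, so by ergodicity it is a
constant multiple of that law (its Radon–Nikodym density is shift-invariant, hence a.e. constant).
Evaluating at `C = univ` identifies the constant as `P(X ∈ A)`, so the joint law of `X` and `(Yᵢ)`
is the product of the marginals; projecting to the coordinate `1` gives the theorem.
-/

open MeasureTheory Measure Set

namespace MeasureTheory.Measure

variable {α β : Type*} [MeasurableSpace α] [MeasurableSpace β] {μ : Measure (α × β)}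
  {S : β → β} {A : Set α}

lemma snd_restrict_prod_univ_apply (A : Set α) {C : Set β} (hC : MeasurableSet C) :
    (μ.restrict (A ×ˢ univ)).snd C = μ (A ×ˢ C) := by
  rw [snd_apply hC, restrict_apply (measurable_snd hC), ← univ_prod, prod_inter_prod,
    inter_univ, univ_inter]

lemma measurePreserving_snd_restrict_prod_univ (hS : Measurable S)
    (hμ : μ.map (Prod.map id S) = μ) (hA : MeasurableSet A) :
    MeasurePreserving S (μ.restrict (A ×ˢ univ)).snd (μ.restrict (A ×ˢ univ)).snd := by
  have hT : Measurable (Prod.map id S : α × β → α × β) := measurable_id.prodMap hS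
  -- `A ×ˢ univ` is `id × S`-invariant on the nose
  have hrestrict : (μ.restrict (A ×ˢ univ)).map (Prod.map id S) = μ.restrict (A ×ˢ univ) :=
    (restrict_map hT (hA.prod .univ)).symm.trans (by rw [hμ])
  refine ⟨hS, ?_⟩
  conv_rhs => rw [← hrestrict]
  rw [snd, snd, map_map hS measurable_snd, map_map measurable_snd hT]
  rfl

theorem eq_fst_prod_snd_of_ergodic [IsProbabilityMeasure μ] (hμ : μ.map (Prod.map id S) = μ)
    (hS : Ergodic S μ.snd) : μ = μ.fst.prod μ.snd := by
  refine (prod_eq fun A C hA hC => ?_).symm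
  obtain ⟨c, hc⟩ := hS.eq_smul_of_absolutelyContinuous
    (measurePreserving_snd_restrict_prod_univ hS.measurable hμ hA)
    (snd_mono restrict_le_self).absolutelyContinuous
  have hslice : ∀ C, MeasurableSet C → μ (A ×ˢ C) = c * μ.snd C := fun C hC => by
    rw [← snd_restrict_prod_univ_apply A hC, hc, smul_apply, smul_eq_mul]
  rw [hslice C hC, fst_apply hA, ← prod_univ, hslice univ .univ, measure_univ, mul_one]

end MeasureTheory.Measure

/-- If `X` is a random variable and `(Y_i)_{i ∈ ℕ}` is a sequence of random variables such that
the pair sequence `(X, Y_i)_{i ∈ ℕ}` is stationary (the joint law of `(X, (Y_i))` is invariant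
under shifting the sequence coordinate) and `(Y_i)_{i ∈ ℕ}` is ergodic (the left shift is a
measure-preserving ergodic transformation for its law), then `X` and `Y_1` are independent. -/
theorem stationary_ergodic_independent
    {Ω E F : Type*} [MeasurableSpace Ω] [MeasurableSpace E] [MeasurableSpace F]
    (P : Measure Ω) [IsProbabilityMeasure P]
    (X : Ω → E) (Y : ℕ → Ω → F)
    (hX : Measurable X) (hY : ∀ i, Measurable (Y i))
    (hstat :
      Measure.map (fun p : E × (ℕ → F) => (p.1, fun n => p.2 (n + 1)))
          (Measure.map (fun ω => (X ω, fun i => Y i ω)) P)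
        = Measure.map (fun ω => (X ω, fun i => Y i ω)) P)
    (herg : Ergodic (fun y : ℕ → F => fun n => y (n + 1))
        (Measure.map (fun ω => fun i => Y i ω) P)) :
    Measure.map (fun ω => (X ω, Y 1 ω)) P
      = (Measure.map X P).prod (Measure.map (Y 1) P) := by
  have hYseq : Measurable fun ω i => Y i ω := measurable_pi_lambda _ hY
  have heval : Measurable fun y : ℕ → F => y 1 := measurable_pi_apply 1
  set μ := P.map fun ω => (X ω, fun i => Y i ω)
  have hsnd : μ.snd = P.map fun ω i => Y i ω := snd_map_prodMk hX
  have : IsProbabilityMeasure μ := isProbabilityMeasure_map (hX.prodMk hYseq).aemeasurable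
  have hμ : μ = μ.fst.prod μ.snd :=
    eq_fst_prod_snd_of_ergodic (S := fun y n => y (n + 1)) hstat (hsnd ▸ herg)
  calc P.map (fun ω => (X ω, Y 1 ω))
      = (μ.fst.prod μ.snd).map (Prod.map id fun y => y 1) := by
        rw [← hμ, map_map (measurable_id.prodMap heval) (hX.prodMk hYseq)]
        rfl
    _ = (P.map X).prod (P.map (Y 1)) := by
        rw [← map_prod_map _ _ measurable_id heval, map_id, fst_map_prodMk hYseq,
          hsnd, map_map heval hYseq]
        rfl
end

section
/- Let d ∈ (0, 1) and let A ⊂ ℝ be a compact set whose d-occupation measure m_A exists. Let I ⊆ ℝ be an open interval containing A and let φ : I → ℝ be a C¹ map with φ'(x) > 0 for all x ∈ I. Then the d-occupation measure m_{φ(A)} of the compact set φ(A) exists and equals |(φ^{−1})'|^{−d} · (φ_* m_A), i.e. the measure with density w ↦ (φ'(φ^{−1}(w)))^d with respect to the pushforward measure φ_* m_A. -/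
open MeasureTheory

/-- `r^(d-1)` times Lebesgue measure on `ℝ` restricted to the closed `r`-neighborhood
`A_r = {z : |z - x| ≤ r for some x ∈ A}` of `A`. -/
noncomputable def occApprox1 (A : Set ℝ) (d r : ℝ) : Measure ℝ :=
  ENNReal.ofReal (r ^ (d - 1)) • (volume.restrict (Metric.cthickening r A))

/-- `m` is the `d`-occupation measure of `A ⊆ ℝ`: `m` has finite and strictly positive total
mass, and the measures `r^(d-1) · Leb|_{A_r}` converge weakly to `m` as `r → 0⁺`. -/
def IsOccupationMeasure1 (A : Set ℝ) (d : ℝ) (m : Measure ℝ) : Prop :=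
  m Set.univ ≠ 0 ∧ m Set.univ ≠ ⊤ ∧
  ∀ f : BoundedContinuousFunction ℝ ℝ,
    Filter.Tendsto (fun r : ℝ => ∫ z, f z ∂(occApprox1 A d r))
      (nhdsWithin 0 (Set.Ioi 0)) (nhds (∫ z, f z ∂m))

/-!
Only a neighbourhood of `A` matters, so `φ` may be replaced by a global `C¹` map `ψ` with
`ψ' ≥ c > 0`, which is a diffeomorphism of `ℝ`. Take a partition of unity near `A` so fine that
on the `i`-th piece `ψ'` stays within a factor `κ` of a constant `p_i`. On that piece
`ψ⁻¹(ψ(A)_r)` lies between `A_{r/(κ p_i)}` and `A_{κ r/p_i}`, and the occupation measure of `A`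
gives `r^{d-1} Leb|_{A_{r/λ}} → λ^{d-1} m_A`. Changing variables
`∫_{ψ(A)_r} g = ∫_{ψ⁻¹(ψ(A)_r)} ψ' · g ∘ ψ`, the lower and upper limits of
`r^{d-1} ∫_{ψ(A)_r} g` are within a factor `κ^{2(1-d)}` of `∫ ψ'^d · g ∘ ψ dm_A` (for `g ≥ 0`,
using `d ≤ 1`), and `κ → 1` gives the claim.
-/

open Metric Set Filter Topology
open scoped BoundedContinuousFunction

theorem tendsto_of_forall_eventually_le_le {α : Type*} {l : Filter α} {f : α → ℝ} {y : ℝ}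
    (h : ∀ ε > 0, ∃ (g k : α → ℝ) (a b : ℝ), Tendsto g l (𝓝 a) ∧ Tendsto k l (𝓝 b) ∧
      y - ε ≤ a ∧ b ≤ y + ε ∧ ∀ᶠ x in l, g x ≤ f x ∧ f x ≤ k x) :
    Tendsto f l (𝓝 y) := by
  refine tendsto_order.2 ⟨fun y' hy' => ?_, fun y' hy' => ?_⟩
  · obtain ⟨g, _, a, _, hg, _, ha, _, hgfk⟩ := h ((y - y') / 2) (by linarith)
    filter_upwards [hg.eventually (lt_mem_nhds (show y' < a by linarith)), hgfk] with x h1 h2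
    exact h1.trans_le h2.1
  · obtain ⟨_, k, _, b, _, hk, _, hb, hgfk⟩ := h ((y' - y) / 2) (by linarith)
    filter_upwards [hk.eventually (gt_mem_nhds (show b < y' by linarith)), hgfk] with x h1 h2
    exact h2.2.trans_lt h1

theorem exists_one_lt_sq_rpow_mul_mem_Icc (s y : ℝ) {ε : ℝ} (hε : 0 < ε) :
    ∃ κ : ℝ, 1 < κ ∧ y - ε ≤ (κ ^ 2) ^ s * y ∧ (κ ^ 2) ^ (-s) * y ≤ y + ε := by
  have hlim : ∀ u : ℝ, Tendsto (fun κ : ℝ => (κ ^ 2) ^ u * y) (𝓝[>] 1) (𝓝 y) := fun u => by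
    have : ContinuousAt (fun κ : ℝ => (κ ^ 2) ^ u * y) 1 :=
      ((continuousAt_id.pow 2).rpow_const (Or.inl (by norm_num))).mul continuousAt_const
    simpa using this.tendsto.mono_left nhdsWithin_le_nhds
  obtain ⟨κ, h_lo, h_hi, hκ⟩ := (((hlim s).eventually (Ici_mem_nhds (sub_lt_self y hε))).and
    (((hlim (-s)).eventually (Iic_mem_nhds (lt_add_of_pos_right y hε))).and
      self_mem_nhdsWithin)).exists
  exact ⟨κ, hκ, h_lo, h_hi⟩

theorem sq_rpow_mul_rpow_le_mul_rpow {s κ c q : ℝ} (hs : s ≤ 0) (hκ : 0 < κ) (hc : 0 < c)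
    (hq : 0 < q) (hcq : c / κ ≤ q) : (κ ^ 2) ^ s * q ^ s ≤ (κ * c) ^ s := by
  rw [← Real.mul_rpow (by positivity) hq.le]
  refine Real.rpow_le_rpow_of_nonpos (mul_pos hκ hc) ?_ hs
  rw [div_le_iff₀ hκ] at hcq
  nlinarith

theorem div_rpow_le_sq_rpow_mul_rpow {s κ c q : ℝ} (hs : s ≤ 0) (hκ : 0 < κ) (hq : 0 < q)
    (hqc : q ≤ κ * c) : (c / κ) ^ s ≤ (κ ^ 2) ^ (-s) * q ^ s := by
  rw [Real.rpow_neg (by positivity), ← div_eq_inv_mul, ← Real.div_rpow hq.le (by positivity)]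
  refine Real.rpow_le_rpow_of_nonpos (by positivity) ?_ hs
  rw [div_le_div_iff₀ (by positivity) hκ]
  nlinarith

theorem exists_boundedContinuousFunction_eqOn {X : Type*} [TopologicalSpace X] [NormalSpace X]
    [T2Space X] {K : Set X} (hK : IsCompact K) {f : X → ℝ} (hf : ContinuousOn f K) :
    ∃ g : X →ᵇ ℝ, EqOn g f K := by
  have : CompactSpace K := isCompact_iff_compactSpace.1 hK
  obtain ⟨g, -, hg⟩ := BoundedContinuousFunction.exists_norm_eq_domRestrict_eq_of_closed
    (BoundedContinuousFunction.mkOfCompact ⟨K.domRestrict f, hf.domRestrict⟩) hK.isClosed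
  exact ⟨g, fun x hx => congr($hg ⟨x, hx⟩)⟩

theorem IsCompact.mem_cthickening_iff {X : Type*} [PseudoMetricSpace X] {A : Set X}
    (hA : IsCompact A) {r : ℝ} {x : X} (hr : 0 ≤ r) :
    x ∈ cthickening r A ↔ ∃ a ∈ A, dist x a ≤ r := by
  simp [hA.cthickening_eq_biUnion_closedBall hr]

theorem IsCompact.exists_forall_closedBall_mem_Icc_div_mul {X : Type*} [PseudoMetricSpace X]
    {K : Set X} (hK : IsCompact K) {p : X → ℝ} (hp : Continuous p) (hp0 : ∀ x, 0 < p x) {κ : ℝ}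
    (hκ : 1 < κ) :
    ∃ ρ > 0, ∀ t ∈ K, ∀ ξ ∈ closedBall t ρ, p ξ ∈ Icc (p t / κ) (κ * p t) := by
  have hlog : Continuous fun x => Real.log (p x) := hp.log fun x => (hp0 x).ne'
  obtain ⟨ε, hε, hclose⟩ := Metric.mem_uniformity_dist.1
    (hK.uniformContinuousAt_of_continuousAt _ (fun x _ => hlog.continuousAt)
      (Metric.dist_mem_uniformity (Real.log_pos hκ)))
  refine ⟨ε / 2, half_pos hε, fun t ht ξ hξ => ?_⟩
  have hξt : dist t ξ < ε := by
    rw [dist_comm]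
    exact (mem_closedBall.1 hξ).trans_lt (half_lt_self hε)
  have hlog_close : |Real.log (p t) - Real.log (p ξ)| < Real.log κ := hclose hξt ht
  have hκ0 : 0 < κ := one_pos.trans hκ
  rw [abs_lt] at hlog_close
  constructor
  · rw [div_le_iff₀ hκ0, ← Real.log_le_log_iff (hp0 t) (mul_pos (hp0 ξ) hκ0),
      Real.log_mul (hp0 ξ).ne' hκ0.ne']
    linarith
  · rw [← Real.log_le_log_iff (hp0 ξ) (mul_pos hκ0 (hp0 t)), Real.log_mul hκ0.ne' (hp0 t).ne']
    linarith

theorem exists_partitionOfUnity_isSubordinate_ball {X : Type*} [MetricSpace X] {K : Set X}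
    (hK : IsCompact K) {ρ : ℝ} (hρ : 0 < ρ) :
    ∃ (T : Finset X) (f : PartitionOfUnity T X K), (∀ t ∈ T, t ∈ K) ∧
      f.IsSubordinate fun t => ball (t : X) ρ := by
  obtain ⟨T, hTK, hcover⟩ := hK.elim_nhds_subcover (fun x => ball x ρ)
    fun x _ => ball_mem_nhds x hρ
  obtain ⟨f, hf⟩ := PartitionOfUnity.exists_isSubordinate hK.isClosed
    (fun t : T => ball (t : X) ρ) (fun _ => isOpen_ball) fun x hx => by
      obtain ⟨t, ht, hxt⟩ := mem_iUnion₂.1 (hcover hx)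
      exact mem_iUnion.2 ⟨⟨t, ht⟩, hxt⟩
  exact ⟨T, f, hTK, hf⟩

theorem setIntegral_le_setIntegral_of_inter_support_subset {α : Type*} [MeasurableSpace α]
    {μ : Measure α} {f : α → ℝ} {s t : Set α} (hf0 : 0 ≤ f) (hs : MeasurableSet s)
    (ht : IntegrableOn f t μ) (hst : s ∩ Function.support f ⊆ t) :
    ∫ x in s, f x ∂μ ≤ ∫ x in t, f x ∂μ := by
  rw [setIntegral_eq_of_subset_of_forall_sdiff_eq_zero hs inter_subset_left
    fun x hx => by_contra fun hfx => hx.2 ⟨hx.1, hfx⟩]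
  exact setIntegral_mono_set ht (ae_of_all _ fun x => hf0 x) hst.eventuallyLE

theorem PartitionOfUnity.integral_eq_sum {ι X : Type*} [Fintype ι] [TopologicalSpace X]
    [MeasurableSpace X] {K : Set X} (f : PartitionOfUnity ι X K) {μ : Measure X}
    (hK : ∀ᵐ x ∂μ, x ∈ K) {G : X → ℝ} (hint : ∀ i, Integrable (fun x => f i x * G x) μ) :
    ∫ x, G x ∂μ = ∑ i, ∫ x, f i x * G x ∂μ := by
  rw [← integral_finsetSum _ fun i _ => hint i]
  refine integral_congr_ae (hK.mono fun x hx => ?_)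
  dsimp only
  rw [← Finset.sum_mul, ← finsum_eq_sum_of_fintype, f.sum_eq_one hx, one_mul]

theorem PartitionOfUnity.le_sum_and_sum_le_of_mem_Icc {X : Type*} [TopologicalSpace X]
    [MeasurableSpace X] {K : Set X} {T : Finset X} (f : PartitionOfUnity T X K) {μ : Measure X}
    (hK : ∀ᵐ x ∂μ, x ∈ K) {p G : X → ℝ} (hp0 : ∀ x, 0 < p x) (hG0 : 0 ≤ G) {s κ : ℝ}
    (hs : s ≤ 0) (hκ : 0 < κ)
    (hratio : ∀ (i : T) x, f i x ≠ 0 → p x ∈ Icc (p i / κ) (κ * p i))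
    (hint : ∀ i, Integrable (fun x => f i x * G x) μ)
    (hint' : ∀ i, Integrable (fun x => f i x * (p x ^ s * G x)) μ) :
    (κ ^ 2) ^ s * ∫ x, p x ^ s * G x ∂μ ≤ ∑ i : T, (κ * p i) ^ s * ∫ x, f i x * G x ∂μ ∧
      ∑ i : T, (p i / κ) ^ s * ∫ x, f i x * G x ∂μ ≤ (κ ^ 2) ^ (-s) * ∫ x, p x ^ s * G x ∂μ := by
  have hweight : ∀ i x, 0 ≤ f i x * G x := fun i x => mul_nonneg (f.nonneg i x) (hG0 x)
  rw [f.integral_eq_sum hK hint', Finset.mul_sum, Finset.mul_sum]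
  constructor <;> refine Finset.sum_le_sum fun i _ => ?_ <;>
    rw [← integral_const_mul, ← integral_const_mul]
  · refine integral_mono ((hint' i).const_mul _) ((hint i).const_mul _) fun x => ?_
    by_cases hx : f i x = 0
    · simp [hx]
    calc (κ ^ 2) ^ s * (f i x * (p x ^ s * G x)) = (κ ^ 2) ^ s * p x ^ s * (f i x * G x) := by
          ring
      _ ≤ (κ * p i) ^ s * (f i x * G x) := mul_le_mul_of_nonneg_right
          (sq_rpow_mul_rpow_le_mul_rpow hs hκ (hp0 i) (hp0 x) (hratio i x hx).1) (hweight i x)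
  · refine integral_mono ((hint i).const_mul _) ((hint' i).const_mul _) fun x => ?_
    by_cases hx : f i x = 0
    · simp [hx]
    calc (p i / κ) ^ s * (f i x * G x) ≤ (κ ^ 2) ^ (-s) * p x ^ s * (f i x * G x) :=
          mul_le_mul_of_nonneg_right
            (div_rpow_le_sq_rpow_mul_rpow hs hκ (hp0 x) (hratio i x hx).2) (hweight i x)
      _ = (κ ^ 2) ^ (-s) * (f i x * (p x ^ s * G x)) := by ring

theorem MeasureTheory.Measure.withDensity_map_eq_map_withDensity {α β : Type*}
    [MeasurableSpace α] [MeasurableSpace β] {μ : Measure α} {f g : α → β}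
    (hg : MeasurableEmbedding g) (hfg : f =ᵐ[μ] g) {ρ : β → ENNReal} {σ : α → ENNReal}
    (hρσ : ∀ᵐ x ∂μ, ρ (g x) = σ x) :
    (μ.map f).withDensity ρ = (μ.withDensity σ).map g := by
  ext s hs
  rw [Measure.map_congr hfg, withDensity_apply _ hs, hg.map_apply, withDensity_apply _
    (hg.measurable hs), Measure.restrict_map hg.measurable hs, hg.lintegral_map]
  exact lintegral_congr_ae (ae_restrict_of_ae hρσ)

theorem Convex.mul_abs_sub_le_abs_image_sub {ψ p : ℝ → ℝ} {D : Set ℝ} (hD : Convex ℝ D)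
    (hψ : ∀ x ∈ D, HasDerivAt ψ (p x) x) {a : ℝ} (hpa : ∀ x ∈ D, a ≤ p x) {x y : ℝ}
    (hx : x ∈ D) (hy : y ∈ D) : a * |x - y| ≤ |ψ x - ψ y| := by
  wlog hyx : y ≤ x generalizing x y
  · rw [abs_sub_comm x, abs_sub_comm (ψ x)]
    exact this hy hx (le_of_not_ge hyx)
  have hmvt := hD.mul_sub_le_image_sub_of_le_deriv (f := ψ)
    (fun z hz => (hψ z hz).continuousAt.continuousWithinAt)
    (fun z hz => (hψ z (interior_subset hz)).differentiableAt.differentiableWithinAt)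
    (fun z hz => (hψ z (interior_subset hz)).deriv ▸ hpa z (interior_subset hz)) y hy x hx hyx
  rw [abs_of_nonneg (sub_nonneg.2 hyx)]
  exact hmvt.trans (le_abs_self _)

theorem Convex.dist_le_div_of_dist_image_le {ψ p : ℝ → ℝ} {D : Set ℝ} (hD : Convex ℝ D)
    (hψ : ∀ x ∈ D, HasDerivAt ψ (p x) x) {a : ℝ} (ha : 0 < a) (hpa : ∀ x ∈ D, a ≤ p x)
    {x y r : ℝ} (hx : x ∈ D) (hy : y ∈ D) (hxy : dist (ψ x) (ψ y) ≤ r) : dist x y ≤ r / a := by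
  rw [le_div_iff₀' ha, Real.dist_eq]
  exact (hD.mul_abs_sub_le_abs_image_sub hψ hpa hx hy).trans hxy

theorem Convex.dist_image_le_of_dist_le_div {ψ p : ℝ → ℝ} {D : Set ℝ} (hD : Convex ℝ D)
    (hψ : ∀ x ∈ D, HasDerivAt ψ (p x) x) {b : ℝ} (hb : 0 < b) (hpb : ∀ x ∈ D, |p x| ≤ b)
    {x y r : ℝ} (hx : x ∈ D) (hy : y ∈ D) (hxy : dist x y ≤ r / b) : dist (ψ x) (ψ y) ≤ r := by
  have := hD.norm_image_sub_le_of_norm_hasDerivWithin_le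
    (fun z hz => (hψ z hz).hasDerivWithinAt) hpb hy hx
  rw [Real.dist_eq] at hxy ⊢
  calc |ψ x - ψ y| ≤ b * |x - y| := this
    _ ≤ r := by rwa [← le_div_iff₀' hb]

theorem exists_hasDerivAt_eqOn_Icc {φ : ℝ → ℝ} {I : Set ℝ} (hI : IsOpen I)
    (hφ : ContDiffOn ℝ 1 φ I) (hφ' : ∀ x ∈ I, 0 < deriv φ x) {a b : ℝ} (hab : a ≤ b)
    (hIcc : Icc a b ⊆ I) :
    ∃ ψ p : ℝ → ℝ, (∀ x, HasDerivAt ψ (p x) x) ∧ Continuous p ∧ (∃ c > 0, ∀ x, c ≤ p x) ∧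
      EqOn ψ φ (Icc a b) ∧ EqOn p (deriv φ) (Icc a b) := by
  have hcont : ContinuousOn (deriv φ) I := hφ.continuousOn_deriv_of_isOpen hI le_rfl
  have hderiv : ∀ x ∈ I, HasDerivAt φ (deriv φ x) x := fun x hx =>
    ((hφ.differentiableOn one_ne_zero).differentiableAt (hI.mem_nhds hx)).hasDerivAt
  set p : ℝ → ℝ := fun x => deriv φ (projIcc a b hab x)
  have hp : Continuous p := hcont.comp_continuous (continuous_subtype_val.comp continuous_projIcc)
    fun x => hIcc (projIcc a b hab x).2
  have hpφ : EqOn p (deriv φ) (Icc a b) := fun x hx => by simp [p, projIcc_of_mem hab hx]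
  obtain ⟨x₀, hx₀, hmin⟩ := isCompact_Icc.exists_isMinOn (nonempty_Icc.2 hab) (hcont.mono hIcc)
  refine ⟨fun x => φ a + ∫ t in a..x, p t, p,
    fun x => (hp.integral_hasStrictDerivAt a x).hasDerivAt.const_add _, hp,
    ⟨deriv φ x₀, hφ' x₀ (hIcc hx₀), fun x => hmin (projIcc a b hab x).2⟩, fun x hx => ?_, hpφ⟩
  have hsub : uIcc a x ⊆ Icc a b := uIcc_subset_Icc (left_mem_Icc.2 hab) hx
  dsimp only
  rw [intervalIntegral.integral_eq_sub_of_hasDerivAt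
    (fun t ht => hpφ (hsub ht) ▸ hderiv t (hIcc (hsub ht))) (hp.intervalIntegrable a x),
    add_sub_cancel]

section Diffeomorphism

variable {A : Set ℝ} {ψ p : ℝ → ℝ} {c : ℝ}

theorem surjective_of_hasDerivAt_of_le (hψ : ∀ x, HasDerivAt ψ (p x) x) (hc : 0 < c)
    (hpc : ∀ x, c ≤ p x) : Function.Surjective ψ := by
  have hslope := mul_sub_le_image_sub_of_le_deriv (fun x => (hψ x).differentiableAt)
    fun x => (hψ x).deriv ▸ hpc x
  refine Continuous.surjective (continuous_iff_continuousAt.2 fun x => (hψ x).continuousAt) ?_ ?_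
  · refine tendsto_atTop_mono' _ ?_
      (tendsto_atTop_add_const_left _ (ψ 0) (tendsto_id.const_mul_atTop hc))
    filter_upwards [eventually_ge_atTop 0] with x hx
    simp only [id]
    linarith [hslope hx]
  · refine tendsto_atBot_mono' _ ?_
      (tendsto_atBot_add_const_left _ (ψ 0) (tendsto_id.const_mul_atBot hc))
    filter_upwards [eventually_le_atBot 0] with x hx
    simp only [id]
    linarith [hslope hx]

theorem setIntegral_eq_setIntegral_preimage_mul (hψ : ∀ x, HasDerivAt ψ (p x) x) (hc : 0 < c)
    (hpc : ∀ x, c ≤ p x) {S : Set ℝ} (hS : MeasurableSet S) (g : ℝ → ℝ) :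
    ∫ y in S, g y = ∫ x in ψ ⁻¹' S, p x * g (ψ x) := by
  have hψc : Continuous ψ := continuous_iff_continuousAt.2 fun x => (hψ x).continuousAt
  have hmono : StrictMono ψ := strictMono_of_deriv_pos fun x => (hψ x).deriv ▸ hc.trans_le (hpc x)
  conv_lhs => rw [← image_preimage_eq S (surjective_of_hasDerivAt_of_le hψ hc hpc)]
  rw [integral_image_eq_integral_abs_deriv_smul (hS.preimage hψc.measurable)
    (fun x _ => (hψ x).hasDerivWithinAt) hmono.injective.injOn]
  simp_rw [abs_of_pos (hc.trans_le (hpc _)), smul_eq_mul]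

theorem preimage_cthickening_image_subset (hA : IsCompact A) (hψ : ∀ x, HasDerivAt ψ (p x) x)
    (hc : 0 < c) (hpc : ∀ x, c ≤ p x) {r : ℝ} (hr : 0 ≤ r) :
    ψ ⁻¹' cthickening r (ψ '' A) ⊆ cthickening (r / c) A := by
  have hψc : Continuous ψ := continuous_iff_continuousAt.2 fun x => (hψ x).continuousAt
  intro x hx
  obtain ⟨_, ⟨a, ha, rfl⟩, hxa⟩ := ((hA.image hψc).mem_cthickening_iff hr).1 hx
  exact (hA.mem_cthickening_iff (div_nonneg hr hc.le)).2 ⟨a, ha,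
    convex_univ.dist_le_div_of_dist_image_le (fun z _ => hψ z) hc (fun z _ => hpc z)
      (mem_univ x) (mem_univ a) hxa⟩

theorem isCompact_preimage_cthickening_image (hA : IsCompact A) (hψ : ∀ x, HasDerivAt ψ (p x) x)
    (hc : 0 < c) (hpc : ∀ x, c ≤ p x) {r : ℝ} (hr : 0 ≤ r) :
    IsCompact (ψ ⁻¹' cthickening r (ψ '' A)) :=
  (hA.cthickening (r := r / c)).of_isClosed_subset
    (isClosed_cthickening.preimage (continuous_iff_continuousAt.2 fun x => (hψ x).continuousAt))
    (preimage_cthickening_image_subset hA hψ hc hpc hr)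

theorem mem_cthickening_of_mem_preimage_cthickening_image (hA : IsCompact A)
    (hψ : ∀ x, HasDerivAt ψ (p x) x) (hc : 0 < c) (hpc : ∀ x, c ≤ p x) {t ρ a r x : ℝ}
    (ha : 0 < a) (hpa : ∀ ξ ∈ closedBall t ρ, a ≤ p ξ) (hr : 0 ≤ r) (hrc : r / c ≤ ρ / 2)
    (hxt : dist x t ≤ ρ / 2) (hx : ψ x ∈ cthickening r (ψ '' A)) :
    x ∈ cthickening (r / a) A := by
  have hψc : Continuous ψ := continuous_iff_continuousAt.2 fun x => (hψ x).continuousAt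
  obtain ⟨_, ⟨a', ha', rfl⟩, hxa'⟩ := ((hA.image hψc).mem_cthickening_iff hr).1 hx
  have hxa'_near : dist x a' ≤ r / c := convex_univ.dist_le_div_of_dist_image_le
    (fun z _ => hψ z) hc (fun z _ => hpc z) (mem_univ x) (mem_univ a') hxa'
  have ha't : a' ∈ closedBall t ρ := by
    rw [mem_closedBall]
    linarith [dist_triangle_left a' t x]
  exact (hA.mem_cthickening_iff (div_nonneg hr ha.le)).2 ⟨a', ha',
    (convex_closedBall t ρ).dist_le_div_of_dist_image_le (fun z _ => hψ z) ha hpa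
      (mem_closedBall.2 (by linarith [dist_nonneg (x := x) (y := t)])) ha't hxa'⟩

theorem mem_preimage_cthickening_image_of_mem_cthickening (hA : IsCompact A)
    (hψ : ∀ x, HasDerivAt ψ (p x) x) {t ρ b r x : ℝ} (hb : 0 < b)
    (hpb : ∀ ξ ∈ closedBall t ρ, |p ξ| ≤ b) (hr : 0 ≤ r) (hrb : r / b ≤ ρ / 2)
    (hxt : dist x t ≤ ρ / 2) (hx : x ∈ cthickening (r / b) A) :
    ψ x ∈ cthickening r (ψ '' A) := by
  obtain ⟨a', ha', hxa'⟩ := (hA.mem_cthickening_iff (div_nonneg hr hb.le)).1 hx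
  have ha't : a' ∈ closedBall t ρ := by
    rw [mem_closedBall]
    linarith [dist_triangle_left a' t x]
  exact closedBall_subset_cthickening (mem_image_of_mem ψ ha') r
    ((convex_closedBall t ρ).dist_image_le_of_dist_le_div (fun z _ => hψ z) hb hpb
      (mem_closedBall.2 (by linarith [dist_nonneg (x := x) (y := t)])) ha't hxa')

theorem setIntegral_preimage_cthickening_image_eq_sum (hA : IsCompact A)
    (hψ : ∀ x, HasDerivAt ψ (p x) x) (hc : 0 < c) (hpc : ∀ x, c ≤ p x) {ι : Type*} [Fintype ι]
    (f : PartitionOfUnity ι ℝ (cthickening 1 A)) {G : ℝ → ℝ} (hG : Continuous G) {r : ℝ}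
    (hr : 0 ≤ r) (hrc : r ≤ c) :
    ∫ x in ψ ⁻¹' cthickening r (ψ '' A), G x =
      ∑ i, ∫ x in ψ ⁻¹' cthickening r (ψ '' A), f i x * G x := by
  have hB := isCompact_preimage_cthickening_image hA hψ hc hpc hr
  refine f.integral_eq_sum ((ae_restrict_mem hB.measurableSet).mono fun x hx =>
    cthickening_mono ((div_le_one hc).2 hrc) A
      (preimage_cthickening_image_subset hA hψ hc hpc hr hx))
    fun i => ((f i).continuous.mul hG).continuousOn.integrableOn_compact hB

theorem eventually_setIntegral_cthickening_le_and_le (hA : IsCompact A)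
    (hψ : ∀ x, HasDerivAt ψ (p x) x) (hc : 0 < c) (hpc : ∀ x, c ≤ p x) {t ρ a b : ℝ}
    (hρ : 0 < ρ) (ha : 0 < a) (hp_mem : ∀ ξ ∈ closedBall t ρ, p ξ ∈ Icc a b) {h : ℝ → ℝ}
    (hh : Continuous h) (hh0 : 0 ≤ h) (hh_supp : ∀ x, h x ≠ 0 → dist x t ≤ ρ / 2) :
    ∀ᶠ r in 𝓝[>] 0,
      ∫ x in cthickening (r / b) A, h x ≤ ∫ x in ψ ⁻¹' cthickening r (ψ '' A), h x ∧
      ∫ x in ψ ⁻¹' cthickening r (ψ '' A), h x ≤ ∫ x in cthickening (r / a) A, h x := by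
  have hb : 0 < b := ha.trans_le ((hp_mem t (mem_closedBall_self hρ.le)).1.trans
    (hp_mem t (mem_closedBall_self hρ.le)).2)
  have hψc : Continuous ψ := continuous_iff_continuousAt.2 fun x => (hψ x).continuousAt
  filter_upwards [Ioc_mem_nhdsGT (show 0 < min (ρ / 2 * c) (ρ / 2 * b) by positivity)]
    with r ⟨hr0, hr⟩
  have hrc : r / c ≤ ρ / 2 := div_le_of_le_mul₀ hc.le (by positivity) (hr.trans (min_le_left _ _))
  have hrb : r / b ≤ ρ / 2 :=
    div_le_of_le_mul₀ hb.le (by positivity) (hr.trans (min_le_right _ _))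
  constructor
  · refine setIntegral_le_setIntegral_of_inter_support_subset hh0
      isClosed_cthickening.measurableSet
      (hh.continuousOn.integrableOn_compact (isCompact_preimage_cthickening_image hA hψ hc hpc
        hr0.le)) fun x ⟨hx, hx_supp⟩ => ?_
    refine mem_preimage_cthickening_image_of_mem_cthickening hA hψ hb (fun ξ hξ => ?_) hr0.le
      hrb (hh_supp x hx_supp) hx
    rw [abs_of_pos (ha.trans_le (hp_mem ξ hξ).1)]
    exact (hp_mem ξ hξ).2
  · refine setIntegral_le_setIntegral_of_inter_support_subset hh0
      (isClosed_cthickening.preimage hψc).measurableSet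
      (hh.continuousOn.integrableOn_compact hA.cthickening) fun x ⟨hx, hx_supp⟩ => ?_
    exact mem_cthickening_of_mem_preimage_cthickening_image hA hψ hc hpc ha
      (fun ξ hξ => (hp_mem ξ hξ).1) hr0.le hrc (hh_supp x hx_supp) hx

end Diffeomorphism

theorem integral_occApprox1 (A : Set ℝ) (d : ℝ) {r : ℝ} (hr : 0 ≤ r) (f : ℝ → ℝ) :
    ∫ x, f x ∂occApprox1 A d r = r ^ (d - 1) * ∫ x in cthickening r A, f x := by
  rw [occApprox1, integral_smul_measure, ENNReal.toReal_ofReal (Real.rpow_nonneg hr _),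
    smul_eq_mul]

namespace IsOccupationMeasure1

variable {A : Set ℝ} {d : ℝ} {m : Measure ℝ} {ψ p : ℝ → ℝ} {c : ℝ}

theorem isFiniteMeasure (h : IsOccupationMeasure1 A d m) : IsFiniteMeasure m :=
  ⟨lt_top_iff_ne_top.2 h.2.1⟩

theorem measure_compl_thickening (h : IsOccupationMeasure1 A d m) {η : ℝ} (hη : 0 < η) :
    m (thickening η A)ᶜ = 0 := by
  have := h.isFiniteMeasure
  obtain ⟨g, hg_zero, hg_one, hg_mem⟩ := exists_continuous_zero_one_of_isClosed
    (isClosed_cthickening (δ := η / 2) (E := A)) isOpen_thickening.isClosed_compl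
    (disjoint_compl_right_iff_subset.2 (cthickening_subset_thickening' hη (by linarith) A))
  let gb : ℝ →ᵇ ℝ := .mkOfBound g 1 fun x y => Real.dist_le_of_mem_Icc_01 (hg_mem x) (hg_mem y)
  have h_approx : ∀ᶠ r in 𝓝[>] 0, ∫ x, gb x ∂occApprox1 A d r = 0 := by
    filter_upwards [Ioc_mem_nhdsGT (half_pos hη)] with r hr
    rw [integral_occApprox1 A d hr.1.le, setIntegral_eq_zero_of_forall_eq_zero, mul_zero]
    exact fun x hx => hg_zero (cthickening_mono hr.2 A hx)
  have h_int : ∫ x, g x ∂m = 0 :=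
    tendsto_nhds_unique (h.2.2 gb) (tendsto_const_nhds.congr' (h_approx.mono fun _ h => h.symm))
  have h_ae : g =ᵐ[m] 0 := (integral_eq_zero_iff_of_nonneg (fun x => (hg_mem x).1)
    (gb.integrable m)).1 h_int
  refine measure_mono_null (fun x hx => ?_) (ae_iff.1 h_ae)
  simp [hg_one hx]

theorem ae_mem (h : IsOccupationMeasure1 A d m) (hA : IsClosed A) : ∀ᵐ x ∂m, x ∈ A := by
  have h_all : ∀ᵐ x ∂m, ∀ n : ℕ, x ∈ thickening (1 / (n + 1 : ℝ)) A :=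
    ae_all_iff.2 fun n => ae_iff.2 (h.measure_compl_thickening (by positivity))
  filter_upwards [h_all] with x hx
  rw [← hA.closure_eq, closure_eq_iInter_thickening' A (range fun n : ℕ => 1 / (n + 1 : ℝ))]
  · simpa using hx
  · rintro _ ⟨n, rfl⟩
    exact mem_Ioi.2 Nat.one_div_pos_of_nat
  · intro ε hε
    obtain ⟨n, hn⟩ := exists_nat_one_div_lt hε
    exact ⟨_, ⟨n, rfl⟩, Nat.one_div_pos_of_nat, hn.le⟩

theorem nonempty (h : IsOccupationMeasure1 A d m) (hA : IsClosed A) : A.Nonempty := by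
  rw [nonempty_iff_ne_empty]
  rintro rfl
  exact h.1 (by simpa using ae_iff.1 (h.ae_mem hA))

theorem integrable (h : IsOccupationMeasure1 A d m) (hA : IsCompact A) {f : ℝ → ℝ}
    (hf : Continuous f) : Integrable f m := by
  have := h.isFiniteMeasure
  rw [← Measure.restrict_eq_self_of_ae_mem (h.ae_mem hA.isClosed)]
  exact hf.continuousOn.integrableOn_compact hA

theorem tendsto_integral_of_continuous (h : IsOccupationMeasure1 A d m) (hA : IsCompact A)
    {f : ℝ → ℝ} (hf : Continuous f) :
    Tendsto (fun r => ∫ x, f x ∂occApprox1 A d r) (𝓝[>] 0) (𝓝 (∫ x, f x ∂m)) := by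
  obtain ⟨g, hg⟩ :=
    exists_boundedContinuousFunction_eqOn (hA.cthickening (r := 1)) hf.continuousOn
  have h_lim : ∫ x, g x ∂m = ∫ x, f x ∂m := integral_congr_ae <|
    (h.ae_mem hA.isClosed).mono fun x hx => hg (self_subset_cthickening A hx)
  refine h_lim ▸ (h.2.2 g).congr' ?_
  filter_upwards [Ioc_mem_nhdsGT one_pos] with r hr
  rw [integral_occApprox1 A d hr.1.le, integral_occApprox1 A d hr.1.le,
    setIntegral_congr_fun isClosed_cthickening.measurableSet
      (hg.mono (cthickening_mono hr.2 A))]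

theorem tendsto_setIntegral_cthickening_div (h : IsOccupationMeasure1 A d m) (hA : IsCompact A)
    {f : ℝ → ℝ} (hf : Continuous f) {c : ℝ} (hc : 0 < c) :
    Tendsto (fun r => r ^ (d - 1) * ∫ x in cthickening (r / c) A, f x) (𝓝[>] 0)
      (𝓝 (c ^ (d - 1) * ∫ x, f x ∂m)) := by
  have h_div : Tendsto (· / c) (𝓝[>] (0 : ℝ)) (𝓝[>] 0) := by
    refine tendsto_nhdsWithin_iff.2 ⟨?_, eventually_mem_nhdsWithin.mono fun r hr => div_pos hr hc⟩
    simpa using (tendsto_id.div_const c).mono_left (nhdsWithin_le_nhds (a := (0 : ℝ)))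
  refine (((h.tendsto_integral_of_continuous hA hf).comp h_div).const_mul (c ^ (d - 1))).congr' ?_
  filter_upwards [self_mem_nhdsWithin] with r (hr : 0 < r)
  rw [Function.comp_apply, integral_occApprox1 A d (div_pos hr hc).le, ← mul_assoc,
    ← Real.mul_rpow hc.le (div_pos hr hc).le, mul_div_cancel₀ r hc.ne']

theorem tendsto_setIntegral_preimage_cthickening_image_of_nonneg (h : IsOccupationMeasure1 A d m)
    (hd : d ≤ 1) (hA : IsCompact A) (hψ : ∀ x, HasDerivAt ψ (p x) x) (hp : Continuous p)
    (hc : 0 < c) (hpc : ∀ x, c ≤ p x) {G : ℝ → ℝ} (hG : Continuous G) (hG0 : 0 ≤ G) :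
    Tendsto (fun r => r ^ (d - 1) * ∫ x in ψ ⁻¹' cthickening r (ψ '' A), G x) (𝓝[>] 0)
      (𝓝 (∫ x, p x ^ (d - 1) * G x ∂m)) := by
  have hp0 : ∀ x, 0 < p x := fun x => hc.trans_le (hpc x)
  refine tendsto_of_forall_eventually_le_le fun ε hε => ?_
  obtain ⟨κ, hκ, hκ_lo, hκ_hi⟩ :=
    exists_one_lt_sq_rpow_mul_mem_Icc (d - 1) (∫ x, p x ^ (d - 1) * G x ∂m) hε
  have hκ0 : 0 < κ := one_pos.trans hκ
  have hK : IsCompact (cthickening 1 A) := hA.cthickening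
  obtain ⟨ρ, hρ, hratio⟩ := hK.exists_forall_closedBall_mem_Icc_div_mul hp hp0 hκ
  obtain ⟨T, f, hTK, hf⟩ := exists_partitionOfUnity_isSubordinate_ball hK (half_pos hρ)
  have hsupp : ∀ (i : T) x, f i x ≠ 0 → dist x i ≤ ρ / 2 := fun i x hx =>
    (mem_ball.1 (hf i (subset_tsupport _ hx))).le
  have hfG : ∀ i : T, Continuous fun x => f i x * G x := fun i => (f i).continuous.mul hG
  have hpiece := fun i : T => eventually_setIntegral_cthickening_le_and_le hA hψ hc hpc hρ
    (div_pos (hp0 i) hκ0) (hratio i (hTK i i.2)) (hfG i)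
    (fun x => mul_nonneg (f.nonneg i x) (hG0 x)) fun x hx => hsupp i x (left_ne_zero_of_mul hx)
  obtain ⟨h_lo, h_hi⟩ := f.le_sum_and_sum_le_of_mem_Icc
    ((h.ae_mem hA.isClosed).mono fun x hx => self_subset_cthickening A hx) hp0 hG0
    (by linarith : d - 1 ≤ 0) hκ0
    (fun i x hx => hratio i (hTK i i.2) x (mem_closedBall.2 ((hsupp i x hx).trans (by linarith))))
    (fun i => h.integrable hA (hfG i))
    fun i => h.integrable hA ((f i).continuous.mul
      ((hp.rpow_const fun x => Or.inl (hp0 x).ne').mul hG))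
  refine ⟨_, _, _, _, tendsto_finsetSum _ fun i _ =>
      h.tendsto_setIntegral_cthickening_div hA (hfG i) (mul_pos hκ0 (hp0 i)),
    tendsto_finsetSum _ fun i _ =>
      h.tendsto_setIntegral_cthickening_div hA (hfG i) (div_pos (hp0 i) hκ0),
    hκ_lo.trans h_lo, h_hi.trans hκ_hi, ?_⟩
  filter_upwards [eventually_all.2 hpiece, Ioc_mem_nhdsGT hc] with r hr ⟨hr0, hrc⟩
  rw [setIntegral_preimage_cthickening_image_eq_sum hA hψ hc hpc f hG hr0.le hrc, Finset.mul_sum]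
  exact ⟨Finset.sum_le_sum fun i _ => mul_le_mul_of_nonneg_left (hr i).1 (by positivity),
    Finset.sum_le_sum fun i _ => mul_le_mul_of_nonneg_left (hr i).2 (by positivity)⟩

theorem tendsto_setIntegral_preimage_cthickening_image (h : IsOccupationMeasure1 A d m)
    (hd : d ≤ 1) (hA : IsCompact A) (hψ : ∀ x, HasDerivAt ψ (p x) x) (hp : Continuous p)
    (hc : 0 < c) (hpc : ∀ x, c ≤ p x) {G : ℝ → ℝ} (hG : Continuous G) :
    Tendsto (fun r => r ^ (d - 1) * ∫ x in ψ ⁻¹' cthickening r (ψ '' A), G x) (𝓝[>] 0)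
      (𝓝 (∫ x, p x ^ (d - 1) * G x ∂m)) := by
  have hGpos : Continuous fun x => max (G x) 0 := hG.max continuous_const
  have hGneg : Continuous fun x => max (-G x) 0 := hG.neg.max continuous_const
  have hpG : ∀ {F : ℝ → ℝ}, Continuous F → Integrable (fun x => p x ^ (d - 1) * F x) m :=
    fun hF => h.integrable hA ((hp.rpow_const fun x => Or.inl (hc.trans_le (hpc x)).ne').mul hF)
  have hlim := (h.tendsto_setIntegral_preimage_cthickening_image_of_nonneg hd hA hψ hp hc hpc
    hGpos fun x => le_max_right _ _).sub
    (h.tendsto_setIntegral_preimage_cthickening_image_of_nonneg hd hA hψ hp hc hpc hGneg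
      fun x => le_max_right _ _)
  rw [← integral_sub (hpG hGpos) (hpG hGneg)] at hlim
  simp_rw [← mul_sub, max_zero_sub_eq_self] at hlim
  refine hlim.congr' ?_
  filter_upwards [self_mem_nhdsWithin] with r (hr : 0 < r)
  have hB := isCompact_preimage_cthickening_image hA hψ hc hpc hr.le
  rw [← integral_sub (hGpos.continuousOn.integrableOn_compact hB)
    (hGneg.continuousOn.integrableOn_compact hB)]
  simp_rw [max_zero_sub_eq_self]

theorem image_of_hasDerivAt (h : IsOccupationMeasure1 A d m) (hd : d ≤ 1) (hA : IsCompact A)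
    (hψ : ∀ x, HasDerivAt ψ (p x) x) (hp : Continuous p) (hc : 0 < c) (hpc : ∀ x, c ≤ p x) :
    IsOccupationMeasure1 (ψ '' A) d
      ((m.withDensity fun x => ENNReal.ofReal (p x ^ d)).map ψ) := by
  have := h.isFiniteMeasure
  have hψc : Continuous ψ := continuous_iff_continuousAt.2 fun x => (hψ x).continuousAt
  have hp0 : ∀ x, 0 < p x := fun x => hc.trans_le (hpc x)
  have hpd : Continuous fun x => p x ^ d := hp.rpow_const fun x => Or.inl (hp0 x).ne'
  have hρ : Measurable fun x => ENNReal.ofReal (p x ^ d) := hpd.measurable.ennreal_ofReal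
  rw [IsOccupationMeasure1, Measure.map_apply hψc.measurable MeasurableSet.univ, preimage_univ]
  refine ⟨?_, ?_, fun g => ?_⟩
  · rw [Ne, withDensity_apply_eq_zero' hρ.aemeasurable]
    simpa [Real.rpow_pos_of_pos (hp0 _)] using h.1
  · rw [withDensity_apply _ MeasurableSet.univ, Measure.restrict_univ]
    exact (h.integrable hA hpd).lintegral_lt_top.ne
  have hlim := h.tendsto_setIntegral_preimage_cthickening_image hd hA hψ hp hc hpc
    (G := fun x => p x * g (ψ x)) (hp.mul (g.continuous.comp hψc))
  rw [integral_map hψc.aemeasurable g.continuous.aestronglyMeasurable,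
    integral_withDensity_eq_integral_toReal_smul hρ (ae_of_all _ fun _ => ENNReal.ofReal_lt_top)]
  convert hlim.congr' ?_ using 2
  · refine integral_congr_ae (ae_of_all _ fun x => ?_)
    dsimp only
    rw [ENNReal.toReal_ofReal (Real.rpow_nonneg (hp0 x).le d), smul_eq_mul, ← mul_assoc,
      ← Real.rpow_add_one (hp0 x).ne', sub_add_cancel]
  · filter_upwards [self_mem_nhdsWithin] with r (hr : 0 < r)
    rw [integral_occApprox1 _ _ hr.le,
      setIntegral_eq_setIntegral_preimage_mul hψ hc hpc isClosed_cthickening.measurableSet]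

end IsOccupationMeasure1

/-- One-dimensional coordinate change for occupation measures: if the compact `A ⊆ ℝ` has a
`d`-occupation measure `m_A` with `d ∈ (0,1)`, and `φ` is `C¹` with strictly positive
derivative on an open interval `I ⊇ A`, then `φ(A)` has a `d`-occupation measure, namely the
measure with density `w ↦ (φ'(φ⁻¹(w)))^d` with respect to the pushforward `φ_* m_A`. -/
theorem occupationMeasure1_coordinate_change
    (d : ℝ) (hd : d ∈ Set.Ioo (0 : ℝ) 1)
    (A : Set ℝ) (hA : IsCompact A)
    (mA : Measure ℝ) (hmA : IsOccupationMeasure1 A d mA)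
    (I : Set ℝ) (hIopen : IsOpen I) (hIinterval : I.OrdConnected) (hAI : A ⊆ I)
    (φ : ℝ → ℝ) (hφ : ContDiffOn ℝ 1 φ I) (hφ' : ∀ x ∈ I, 0 < deriv φ x) :
    IsOccupationMeasure1 (φ '' A) d
      ((Measure.map φ mA).withDensity
        (fun w => ENNReal.ofReal ((deriv φ (Function.invFunOn φ I w)) ^ d))) := by
  have hAne := hmA.nonempty hA.isClosed
  have hAK : A ⊆ Icc (sInf A) (sSup A) := fun x hx =>
    ⟨csInf_le hA.bddBelow hx, le_csSup hA.bddAbove hx⟩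
  obtain ⟨ψ, p, hψ, hp, ⟨c, hc, hpc⟩, hψφ, hpφ⟩ := exists_hasDerivAt_eqOn_Icc hIopen hφ hφ'
    (hAK (hA.sInf_mem hAne)).2
    (hIinterval.out (hAI (hA.sInf_mem hAne)) (hAI (hA.sSup_mem hAne)))
  have hinj : InjOn φ I := (strictMonoOn_of_deriv_pos hIinterval.convex hφ.continuousOn
    fun x hx => hφ' x (interior_subset hx)).injOn
  have hψ_emb : MeasurableEmbedding ψ :=
    (continuous_iff_continuousAt.2 fun x => (hψ x).continuousAt).measurableEmbedding
      (strictMono_of_deriv_pos fun x => (hψ x).deriv ▸ hc.trans_le (hpc x)).injective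
  have h_ae := hmA.ae_mem hA.isClosed
  rw [Measure.withDensity_map_eq_map_withDensity hψ_emb
    (h_ae.mono fun x hx => (hψφ (hAK hx)).symm) (σ := fun x => ENNReal.ofReal (p x ^ d))
    (h_ae.mono fun x hx => by rw [hψφ (hAK hx), hinj.leftInvOn_invFunOn (hAI hx), hpφ (hAK hx)]),
    ← (hψφ.mono hAK).image_eq]
  exact hmA.image_of_hasDerivAt hd.2.le hA hψ hp hc hpc
end

section
/- Let (Ω, 𝒜, μ) be a probability space, let T : Ω → Ω be an ergodic measure-preserving transformation, and let Y : Ω → [0, ∞) be measurable with Y < ∞ almost everywhere. Suppose that for every n ≥ 1 the random variable (1/n) · Σ_{i=0}^{n−1} Y ∘ T^i has the same distribution as Y. Then E[Y] < ∞ and Y = E[Y] almost everywhere; in particular Y is almost everywhere constant. -/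
open MeasureTheory
open scoped ENNReal

private lemma exp_avg_le (a b : ℝ) :
    Real.exp (-((a + b) / 2)) ≤ (Real.exp (-a) + Real.exp (-b)) / 2 := by
  have h1 : Real.exp (-((a + b) / 2)) = Real.exp (-(a / 2)) * Real.exp (-(b / 2)) := by
    rw [← Real.exp_add]; ring_nf
  have h2 : Real.exp (-a) = Real.exp (-(a / 2)) ^ 2 := by
    rw [sq, ← Real.exp_add]; ring_nf
  have h3 : Real.exp (-b) = Real.exp (-(b / 2)) ^ 2 := by
    rw [sq, ← Real.exp_add]; ring_nf
  rw [h1, h2, h3]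
  nlinarith [sq_nonneg (Real.exp (-(a / 2)) - Real.exp (-(b / 2)))]

private lemma eq_of_exp_avg_eq {a b : ℝ}
    (h : Real.exp (-((a + b) / 2)) = (Real.exp (-a) + Real.exp (-b)) / 2) : a = b := by
  have h1 : Real.exp (-((a + b) / 2)) = Real.exp (-(a / 2)) * Real.exp (-(b / 2)) := by
    rw [← Real.exp_add]; ring_nf
  have h2 : Real.exp (-a) = Real.exp (-(a / 2)) ^ 2 := by
    rw [sq, ← Real.exp_add]; ring_nf
  have h3 : Real.exp (-b) = Real.exp (-(b / 2)) ^ 2 := by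
    rw [sq, ← Real.exp_add]; ring_nf
  rw [h1, h2, h3] at h
  have huv : Real.exp (-(a / 2)) = Real.exp (-(b / 2)) := by
    nlinarith [sq_nonneg (Real.exp (-(a / 2)) - Real.exp (-(b / 2)))]
  have := Real.exp_injective huv
  linarith

/-- Let `T` be an ergodic measure-preserving transformation of a probability space and let
`Y ≥ 0` be measurable and almost everywhere finite. If for every `n ≥ 1` the ergodic average
`(1/n) Σ_{i=0}^{n-1} Y ∘ T^i` has the same distribution as `Y`, then `E[Y] < ∞` and
`Y = E[Y]` almost everywhere; in particular `Y` is almost everywhere constant. -/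
theorem ae_const_of_averages_same_distribution
    {Ω : Type*} [MeasurableSpace Ω] (μ : Measure Ω) [IsProbabilityMeasure μ]
    (T : Ω → Ω) (hT : Ergodic T μ)
    (Y : Ω → ℝ≥0∞) (hY : Measurable Y)
    (hfin : ∀ᵐ ω ∂μ, Y ω < ⊤)
    (hdist : ∀ n : ℕ, 1 ≤ n →
      Measure.map (fun ω => (∑ i ∈ Finset.range n, Y (T^[i] ω)) / (n : ℝ≥0∞)) μ
        = Measure.map Y μ) :
    (∫⁻ ω, Y ω ∂μ) < ⊤ ∧ ∀ᵐ ω ∂μ, Y ω = ∫⁻ ω', Y ω' ∂μ := by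
  have hTm : Measurable T := hT.measurable
  -- φ : strictly convex decreasing bounded test function
  set φ : ℝ≥0∞ → ℝ := fun x => Real.exp (-x.toReal) with hφdef
  have hφm : Measurable φ :=
    Real.continuous_exp.measurable.comp ENNReal.measurable_toReal.neg
  have hφ_bd : ∀ x, ‖φ x‖ ≤ 1 := by
    intro x
    rw [Real.norm_eq_abs, abs_of_pos (Real.exp_pos _)]
    exact Real.exp_le_one_iff.2 (neg_nonpos.2 ENNReal.toReal_nonneg)
  -- the n = 2 average
  set Z : Ω → ℝ≥0∞ := fun ω => (∑ i ∈ Finset.range 2, Y (T^[i] ω)) / ((2 : ℕ) : ℝ≥0∞)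
    with hZdef
  have hZm : Measurable Z := by
    apply Measurable.div _ measurable_const
    exact Finset.measurable_sum _ fun i _ => hY.comp (hTm.iterate i)
  have hZeq : ∀ ω, Z ω = (Y ω + Y (T ω)) / 2 := by
    intro ω
    simp [hZdef, Finset.sum_range_succ]
  have hintYT : Integrable (fun ω => φ (Y (T ω))) μ := by
    refine (integrable_const (1 : ℝ)).mono' ((hφm.comp (hY.comp hTm)).aestronglyMeasurable) ?_
    exact Filter.Eventually.of_forall fun ω => hφ_bd _
  -- integrals of φ against Y, Y∘T and Z all agree
  have hint : ∀ {f : Ω → ℝ≥0∞}, Measurable f → Integrable (fun ω => φ (f ω)) μ := by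
    intro f hf
    refine (integrable_const (1 : ℝ)).mono' ((hφm.comp hf).aestronglyMeasurable) ?_
    exact Filter.Eventually.of_forall fun ω => hφ_bd _
  have hmapT : Measure.map T μ = μ := hT.toMeasurePreserving.map_eq
  have hIT : ∫ ω, φ (Y (T ω)) ∂μ = ∫ ω, φ (Y ω) ∂μ := by
    have hasm : AEStronglyMeasurable (fun ω => φ (Y ω)) (Measure.map T μ) := by
      rw [hmapT]; exact (hφm.comp hY).aestronglyMeasurable
    have h := MeasureTheory.integral_map hTm.aemeasurable hasm
    rw [hmapT] at h
    exact h.symm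
  have hIZ : ∫ ω, φ (Z ω) ∂μ = ∫ ω, φ (Y ω) ∂μ := by
    have h1 : ∫ ω, φ (Z ω) ∂μ = ∫ x, φ x ∂(Measure.map Z μ) :=
      (MeasureTheory.integral_map hZm.aemeasurable hφm.aestronglyMeasurable).symm
    have h2 : ∫ x, φ x ∂(Measure.map Y μ) = ∫ ω, φ (Y ω) ∂μ :=
      MeasureTheory.integral_map hY.aemeasurable hφm.aestronglyMeasurable
    rw [h1, hdist 2 (by norm_num), h2]
  -- a.e. finiteness of Y ∘ T
  have hfinT : ∀ᵐ ω ∂μ, Y (T ω) < ⊤ :=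
    hT.toMeasurePreserving.quasiMeasurePreserving.ae hfin
  -- pointwise convexity inequality a.e.
  have hle : ∀ᵐ ω ∂μ, φ (Z ω) ≤ (φ (Y ω) + φ (Y (T ω))) / 2 := by
    filter_upwards [hfin, hfinT] with ω h1 h2
    have htR : (Z ω).toReal = ((Y ω).toReal + (Y (T ω)).toReal) / 2 := by
      rw [hZeq ω, ENNReal.toReal_div, ENNReal.toReal_add h1.ne h2.ne]
      norm_num
    simpa [hφdef, htR] using exp_avg_le (Y ω).toReal (Y (T ω)).toReal
  -- equality of integrals forces pointwise equality a.e.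
  have hI2 : ∫ ω, (φ (Y ω) + φ (Y (T ω))) / 2 ∂μ = ∫ ω, φ (Z ω) ∂μ := by
    rw [integral_div, integral_add (hint hY) hintYT, hIT, hIZ]
    ring
  have hdiff : ∀ᵐ ω ∂μ, (φ (Y ω) + φ (Y (T ω))) / 2 - φ (Z ω) = 0 := by
    have hint2 : Integrable (fun ω => (φ (Y ω) + φ (Y (T ω))) / 2) μ :=
      ((hint hY).add hintYT).div_const 2
    have hsub : Integrable (fun ω => (φ (Y ω) + φ (Y (T ω))) / 2 - φ (Z ω)) μ :=
      hint2.sub (hint hZm)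
    have hnn : 0 ≤ᵐ[μ] fun ω => (φ (Y ω) + φ (Y (T ω))) / 2 - φ (Z ω) := by
      filter_upwards [hle] with ω h
      simp only [Pi.zero_apply]
      linarith
    have hzero : ∫ ω, ((φ (Y ω) + φ (Y (T ω))) / 2 - φ (Z ω)) ∂μ = 0 := by
      rw [integral_sub hint2 (hint hZm), hI2]; ring
    exact (integral_eq_zero_iff_of_nonneg_ae hnn hsub).1 hzero
  -- hence Y ∘ T = Y a.e.
  have hinv : (fun ω => Y (T ω)) =ᵐ[μ] Y := by
    filter_upwards [hdiff, hfin, hfinT] with ω h h1 h2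
    have htR : (Z ω).toReal = ((Y ω).toReal + (Y (T ω)).toReal) / 2 := by
      rw [hZeq ω, ENNReal.toReal_div, ENNReal.toReal_add h1.ne h2.ne]
      norm_num
    have heq : Real.exp (-(((Y ω).toReal + (Y (T ω)).toReal) / 2))
        = (Real.exp (-(Y ω).toReal) + Real.exp (-(Y (T ω)).toReal)) / 2 := by
      have := sub_eq_zero.mp h
      rw [hφdef] at this
      simp only [htR] at this
      linarith [this]
    have := eq_of_exp_avg_eq heq
    exact ((ENNReal.toReal_eq_toReal_iff' h2.ne h1.ne).1 this.symm)
  -- ergodicity: Y is a.e. constant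
  obtain ⟨c, hc⟩ := hT.ae_eq_const_of_ae_eq_comp₀ hY.nullMeasurable hinv
  have hcfin : c < ⊤ := by
    have : ∀ᵐ ω ∂μ, Y ω = c ∧ Y ω < ⊤ := hc.and hfin
    rcases this.exists with ⟨ω, h1, h2⟩
    rwa [h1] at h2
  have hlint : ∫⁻ ω, Y ω ∂μ = c := by
    rw [lintegral_congr_ae hc]
    simp
  refine ⟨by rw [hlint]; exact hcfin, ?_⟩
  filter_upwards [hc] with ω h
  rw [h, hlint]; rfl
end

section
/- Let (E, ρ) be a separable metric space and let (Y_t)_{t≥0} be an E-valued stochastic process on a probability space all of whose sample paths are càdlàg, i.e. t ↦ Y_t(ω) is right-continuous on [0, ∞) and has a left limit at every t > 0. Assume the process is stationary: for every s ≥ 0, the process (Y_{t+s})_{t≥0} has the same finite-dimensional distributions as (Y_t)_{t≥0}. Then for every fixed t > 0, almost surely the left limit lim_{s↑t} Y_s equals Y_t; that is, the process is almost surely continuous at each fixed deterministic time. -/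
/-!
Fix `t > 0` and times `u n ↑ t`. Shifting by `t - u n`, stationarity gives
`ρ(Y_{u n}, Y_t)` the law of `ρ(Y_t, Y_{t + (t - u n)})`, which tends to `0` surely by right
continuity, hence in probability. So `Y_{u n} → Y_t` in probability, a subsequence converges
almost surely, and along it the left limit must be `Y_t`.
-/

open MeasureTheory ProbabilityTheory Filter Topology
open scoped NNReal

theorem MeasureTheory.TendstoInMeasure.of_identDistrib_edist {ι α β E F : Type*}
    [MeasurableSpace α] [MeasurableSpace β] [PseudoEMetricSpace E] [PseudoEMetricSpace F]
    {μ : Measure α} {ν : Measure β} {l : Filter ι} {f : ι → α → E} {g : α → E}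
    {f' : ι → β → F} {g' : β → F}
    (h : ∀ i, IdentDistrib (fun a => edist (f i a) (g a)) (fun b => edist (f' i b) (g' b)) μ ν)
    (hf' : TendstoInMeasure ν f' l g') : TendstoInMeasure μ f l g := by
  intro ε hε
  have hset : ∀ i, μ {a | ε ≤ edist (f i a) (g a)} = ν {b | ε ≤ edist (f' i b) (g' b)} :=
    fun i => (h i).measure_mem_eq measurableSet_Ici
  simpa only [hset] using hf' ε hε

section

variable {Ω E : Type*} [MeasurableSpace Ω] [MeasurableSpace E]

def IsStationaryProcess (P : Measure Ω) (Y : ℝ≥0 → Ω → E) : Prop :=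
  ∀ s : ℝ≥0, ∀ k : ℕ, ∀ tm : Fin k → ℝ≥0,
    Measure.map (fun ω => fun i => Y (tm i + s) ω) P
      = Measure.map (fun ω => fun i => Y (tm i) ω) P

variable [PseudoEMetricSpace E] [OpensMeasurableSpace E] [SecondCountableTopology E]
  {P : Measure Ω} {Y : ℝ≥0 → Ω → E}

theorem IsStationaryProcess.identDistrib_edist (hstat : IsStationaryProcess P Y)
    (hmeas : ∀ t, Measurable (Y t)) (u v s : ℝ≥0) :
    IdentDistrib (fun ω => edist (Y (u + s) ω) (Y (v + s) ω)) (fun ω => edist (Y u ω) (Y v ω))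
      P P := by
  have hpair : IdentDistrib (fun ω i => Y (![u, v] i + s) ω) (fun ω i => Y (![u, v] i) ω) P P :=
    ⟨(measurable_pi_lambda _ fun _ => hmeas _).aemeasurable,
      (measurable_pi_lambda _ fun _ => hmeas _).aemeasurable, hstat s 2 ![u, v]⟩
  exact hpair.comp ((measurable_pi_apply 0).edist (measurable_pi_apply 1))

theorem IsStationaryProcess.tendstoInMeasure_of_tendsto_left [IsFiniteMeasure P]
    (hstat : IsStationaryProcess P Y) (hmeas : ∀ t, Measurable (Y t)) {t : ℝ≥0}
    (hrc : ∀ ω, Tendsto (fun s => Y s ω) (𝓝[≥] t) (𝓝 (Y t ω))) {u : ℕ → ℝ≥0}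
    (hut : ∀ n, u n ≤ t) (hu : Tendsto u atTop (𝓝 t)) :
    TendstoInMeasure P (fun n => Y (u n)) atTop (Y t) := by
  have hright : Tendsto (fun n => t + (t - u n)) atTop (𝓝[≥] t) := by
    refine tendsto_nhdsWithin_iff.2 ⟨?_, .of_forall fun _ => Set.mem_Ici.2 le_self_add⟩
    simpa using (tendsto_const_nhds (x := t)).add ((tendsto_const_nhds (x := t)).sub hu)
  have hright_conv : TendstoInMeasure P (fun n => Y (t + (t - u n))) atTop (Y t) :=
    tendstoInMeasure_of_tendsto_ae (fun _ => (hmeas _).aestronglyMeasurable)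
      (ae_of_all _ fun ω => (hrc ω).comp hright)
  refine hright_conv.of_identDistrib_edist fun n => ?_
  have hshift := (hstat.identDistrib_edist hmeas (u n) t (t - u n)).symm
  rw [add_tsub_cancel_of_le (hut n)] at hshift
  simpa only [edist_comm (Y t _)] using hshift

end

/-- A stationary càdlàg process with values in a separable metric space is, at each fixed
deterministic time `t > 0`, almost surely continuous: the left limit at `t` equals `Y t`.
Stationarity is expressed through equality of all finite-dimensional distributions of the
time-shifted process with those of the original process. -/
theorem stationary_cadlag_ae_continuous_at_fixed_time
    {Ω E : Type*} [MeasurableSpace Ω] [MetricSpace E]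
    [TopologicalSpace.SeparableSpace E] [MeasurableSpace E] [BorelSpace E]
    (P : Measure Ω) [IsProbabilityMeasure P]
    (Y : ℝ≥0 → Ω → E) (hmeas : ∀ t, Measurable (Y t))
    -- right-continuity of every sample path
    (hrc : ∀ ω, ∀ t : ℝ≥0,
      Filter.Tendsto (fun s => Y s ω) (nhdsWithin t (Set.Ici t)) (nhds (Y t ω)))
    -- existence of left limits of every sample path at every positive time
    (hll : ∀ ω, ∀ t : ℝ≥0, 0 < t →
      ∃ l : E, Filter.Tendsto (fun s => Y s ω) (nhdsWithin t (Set.Iio t)) (nhds l))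
    -- stationarity: the finite-dimensional distributions are shift-invariant
    (hstat : ∀ s : ℝ≥0, ∀ k : ℕ, ∀ tm : Fin k → ℝ≥0,
      Measure.map (fun ω => fun i => Y (tm i + s) ω) P
        = Measure.map (fun ω => fun i => Y (tm i) ω) P) :
    ∀ t : ℝ≥0, 0 < t →
      ∀ᵐ ω ∂P, Filter.Tendsto (fun s => Y s ω) (nhdsWithin t (Set.Iio t)) (nhds (Y t ω)) := by
  intro t ht
  obtain ⟨u, -, hu_mem, hu⟩ := exists_seq_strictMono_tendsto' ht
  have hconv : TendstoInMeasure P (fun n => Y (u n)) atTop (Y t) :=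
    IsStationaryProcess.tendstoInMeasure_of_tendsto_left hstat hmeas (hrc · t)
      (fun n => (hu_mem n).2.le) hu
  obtain ⟨ns, hns, hae⟩ := hconv.exists_seq_tendsto_ae
  have hu_left : Tendsto (u ∘ ns) atTop (𝓝[<] t) :=
    tendsto_nhdsWithin_iff.2 ⟨hu.comp hns.tendsto_atTop, .of_forall fun k => (hu_mem _).2⟩
  filter_upwards [hae] with ω hω
  obtain ⟨l, hl⟩ := hll ω t ht
  rwa [tendsto_nhds_unique (hl.comp hu_left) hω] at hl
end
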